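/- arXiv:1811.02004 — 3 statements merged into one kernel-verified Lean document; each statement's English description precedes it below -/
import Mathlib

section
/- For any nondegenerate quadratic form Q on (ℤ/2)^(2m), the Gauss sum satisfies ∑_{x ∈ (ℤ/2)^(2m)} (-1)^(Q(x)) = (-1)^(Arf(Q)) · 2^m. In particular, |∑_x (-1)^(Q(x))| = 2^m. -/
/-!
In the symplectic basis `eᵢ, fᵢ` the form splits as an orthogonal sum of planes,
`Q (∑ aᵢ eᵢ + cᵢ fᵢ) = ∑ (aᵢ Q(eᵢ) + cᵢ Q(fᵢ) + aᵢ cᵢ)`, so the Gauss sum factors into `m` sums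
over `(ℤ/2)²`, each equal to `2 · (-1)^(Q(eᵢ) Q(fᵢ))`.
-/

theorem neg_one_pow_val_add (a b : ZMod 2) :
    (-1 : ℤ) ^ (a + b).val = (-1) ^ a.val * (-1) ^ b.val := by
  decide +revert

theorem neg_one_pow_val_sum {ι : Type*} (s : Finset ι) (t : ι → ZMod 2) :
    (-1 : ℤ) ^ (∑ i ∈ s, t i).val = ∏ i ∈ s, (-1 : ℤ) ^ (t i).val := by
  induction s using Finset.cons_induction with
  | empty => rfl
  | cons i s hi ih => rw [Finset.sum_cons, Finset.prod_cons, neg_one_pow_val_add, ih]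

theorem sum_neg_one_pow_val_mul_add_mul_add_mul (α β : ZMod 2) :
    ∑ p : ZMod 2 × ZMod 2, (-1 : ℤ) ^ (p.1 * α + p.2 * β + p.1 * p.2).val =
      2 * (-1) ^ (α * β).val := by
  decide +revert

theorem Module.Basis.sum_eq_sum_pairs {ι R M β : Type*} [Fintype ι] [DecidableEq ι]
    [CommSemiring R] [Fintype R] [AddCommMonoid M] [Module R M] [Fintype M] [AddCommMonoid β]
    (b : Module.Basis (ι ⊕ ι) R M) (g : M → β) :
    ∑ x, g x = ∑ h : ι → R × R, g (∑ i, ((h i).1 • b (.inl i) + (h i).2 • b (.inr i))) := by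
  let pairs : (ι → R × R) ≃ M :=
    (Equiv.arrowProdEquivProdArrow ι (fun _ => R) (fun _ => R)).trans <|
      (Equiv.sumArrowEquivProdArrow ι ι R).symm.trans b.equivFun.toEquiv.symm
  refine (Fintype.sum_equiv pairs _ _ fun h => ?_).symm
  simp [pairs, Module.Basis.equivFun_symm_apply, Fintype.sum_sum_type, Finset.sum_add_distrib]

namespace QuadraticMap

theorem map_sum_of_pairwise_isOrtho {R M N : Type*} [CommRing R] [AddCommGroup M] [Module R M]
    [AddCommGroup N] [Module R N] (Q : QuadraticMap R M N) {ι : Type*} (s : Finset ι)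
    (f : ι → M) (hf : Pairwise fun i j => Q.IsOrtho (f i) (f j)) :
    Q (∑ i ∈ s, f i) = ∑ i ∈ s, Q (f i) := by
  induction s using Finset.cons_induction with
  | empty => simp
  | cons i s hi ih =>
    have isOrtho_sum : Q.IsOrtho (f i) (∑ j ∈ s, f j) := by
      rw [← isOrtho_polarBilin, map_sum]
      exact Finset.sum_eq_zero fun j hj =>
        isOrtho_polarBilin.mpr (hf (ne_of_mem_of_not_mem hj hi).symm)
    rw [Finset.sum_cons, Finset.sum_cons, isOrtho_def.mp isOrtho_sum, ih]

variable {V : Type*} [AddCommGroup V] [Module (ZMod 2) V]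

theorem exists_eq_of_polar_add_right {Q : V → ZMod 2}
    (h : ∀ x y z, polar Q x (y + z) = polar Q x y + polar Q x z) :
    ∃ Q' : QuadraticMap (ZMod 2) V (ZMod 2), ⇑Q' = Q := by
  have polar_zero_right (x : V) : polar Q x 0 = 0 := by
    simpa using h x 0 0
  have polar_add_left (x x' y : V) : polar Q (x + x') y = polar Q x y + polar Q x' y := by
    simp only [polar_comm Q _ y, h]
  refine ⟨ofPolar Q (fun a x => ?_) polar_add_left (fun a x y => ?_), rfl⟩
  all_goals obtain rfl | rfl : a = 0 ∨ a = 1 := by decide +revert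
  · simpa [polar] using polar_zero_right 0
  · simp
  · simpa [polar_comm Q 0] using polar_zero_right y
  · simp

variable (Q : QuadraticMap (ZMod 2) V (ZMod 2))

theorem map_smul_add_smul (a c : ZMod 2) (e f : V) :
    Q (a • e + c • f) = a * Q e + c * Q f + a * c * polar Q e f := by
  have mul_self : ∀ a : ZMod 2, a * a = a := by decide
  rw [QuadraticMap.map_add Q, Q.map_smul, Q.map_smul, polar_smul_left, polar_smul_right,
    mul_self, mul_self, smul_eq_mul, smul_eq_mul, smul_eq_mul, smul_eq_mul, mul_assoc]

theorem map_sum_smul_add_smul {ι : Type*} [DecidableEq ι] (e f : ι → V)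
    (hee : ∀ i j, polar Q (e i) (e j) = 0) (hff : ∀ i j, polar Q (f i) (f j) = 0)
    (hef : ∀ i j, polar Q (e i) (f j) = if i = j then 1 else 0)
    (s : Finset ι) (a c : ι → ZMod 2) :
    Q (∑ i ∈ s, (a i • e i + c i • f i)) =
      ∑ i ∈ s, (a i * Q (e i) + c i * Q (f i) + a i * c i) := by
  have planes_isOrtho :
      Pairwise fun i j => Q.IsOrtho (a i • e i + c i • f i) (a j • e j + c j • f j) := by
    intro i j hij
    rw [← isOrtho_polarBilin]
    simp [polar_add_right, polar_smul_right, hee, hff, hef, polar_comm Q (f i) (e j), hij,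
      hij.symm]
  rw [Q.map_sum_of_pairwise_isOrtho s _ planes_isOrtho]
  simp [map_smul_add_smul, hef]

theorem sum_neg_one_pow_val_eq_of_symplectic {ι : Type*} [Fintype ι] [DecidableEq ι] [Fintype V]
    (b : Module.Basis (ι ⊕ ι) (ZMod 2) V)
    (hee : ∀ i j, polar Q (b (.inl i)) (b (.inl j)) = 0)
    (hff : ∀ i j, polar Q (b (.inr i)) (b (.inr j)) = 0)
    (hef : ∀ i j, polar Q (b (.inl i)) (b (.inr j)) = if i = j then 1 else 0) :
    ∑ x, (-1 : ℤ) ^ (Q x).val =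
      (-1) ^ (∑ i, Q (b (.inl i)) * Q (b (.inr i))).val * 2 ^ Fintype.card ι := by
  simp_rw [b.sum_eq_sum_pairs, map_sum_smul_add_smul Q _ _ hee hff hef, neg_one_pow_val_sum]
  rw [← Fintype.prod_sum fun i (p : ZMod 2 × ZMod 2) =>
    (-1 : ℤ) ^ (p.1 * Q (b (.inl i)) + p.2 * Q (b (.inr i)) + p.1 * p.2).val]
  simp_rw [sum_neg_one_pow_val_mul_add_mul_add_mul]
  rw [Finset.prod_mul_distrib, Finset.prod_const, Finset.card_univ, mul_comm]

end QuadraticMap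

open QuadraticMap in
theorem stmt14_general (m : ℕ) (Q : (Fin (2 * m) → ZMod 2) → ZMod 2)
    (hB₂ : ∀ x y z : Fin (2 * m) → ZMod 2,
      Q (x + (y + z)) + Q x + Q (y + z) =
        (Q (x + y) + Q x + Q y) + (Q (x + z) + Q x + Q z))
    (b : Module.Basis (Fin m ⊕ Fin m) (ZMod 2) (Fin (2 * m) → ZMod 2))
    (hb₁ : ∀ i j, Q (b (Sum.inl i) + b (Sum.inl j)) + Q (b (Sum.inl i)) +
      Q (b (Sum.inl j)) = 0)
    (hb₂ : ∀ i j, Q (b (Sum.inr i) + b (Sum.inr j)) + Q (b (Sum.inr i)) +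
      Q (b (Sum.inr j)) = 0)
    (hb₃ : ∀ i j, Q (b (Sum.inl i) + b (Sum.inr j)) + Q (b (Sum.inl i)) +
      Q (b (Sum.inr j)) = if i = j then 1 else 0) :
    (∑ x : Fin (2 * m) → ZMod 2, (-1 : ℤ) ^ (Q x).val =
      (-1 : ℤ) ^ ((∑ j : Fin m, Q (b (Sum.inl j)) * Q (b (Sum.inr j))).val) *
        2 ^ m) ∧
    |∑ x : Fin (2 * m) → ZMod 2, (-1 : ℤ) ^ (Q x).val| = 2 ^ m := by
  obtain ⟨Q, rfl⟩ := exists_eq_of_polar_add_right (Q := Q)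
    (by simpa only [polar, CharTwo.sub_eq_add] using hB₂)
  have gauss := sum_neg_one_pow_val_eq_of_symplectic Q b
    (by simpa only [polar, CharTwo.sub_eq_add] using hb₁)
    (by simpa only [polar, CharTwo.sub_eq_add] using hb₂)
    (by simpa only [polar, CharTwo.sub_eq_add] using hb₃)
  rw [Fintype.card_fin] at gauss
  exact ⟨gauss, by simp [gauss]⟩

/-- For a nondegenerate quadratic form `Q` on `(ℤ/2)^(2m)` with symplectic basis
`b`, the Gauss sum equals `(-1)^(Arf Q) · 2^m`, and in particular has absolute
value `2^m`. -/
theorem stmt14 (m : ℕ) (Q : (Fin (2 * m) → ZMod 2) → ZMod 2)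
    (hB₁ : ∀ x y z : Fin (2 * m) → ZMod 2,
      Q (x + y + z) + Q (x + y) + Q z =
        (Q (x + z) + Q x + Q z) + (Q (y + z) + Q y + Q z))
    (hB₂ : ∀ x y z : Fin (2 * m) → ZMod 2,
      Q (x + (y + z)) + Q x + Q (y + z) =
        (Q (x + y) + Q x + Q y) + (Q (x + z) + Q x + Q z))
    (hnd : ∀ x : Fin (2 * m) → ZMod 2,
      (∀ y, Q (x + y) + Q x + Q y = 0) → x = 0)
    (b : Module.Basis (Fin m ⊕ Fin m) (ZMod 2) (Fin (2 * m) → ZMod 2))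
    (hb₁ : ∀ i j, Q (b (Sum.inl i) + b (Sum.inl j)) + Q (b (Sum.inl i)) +
      Q (b (Sum.inl j)) = 0)
    (hb₂ : ∀ i j, Q (b (Sum.inr i) + b (Sum.inr j)) + Q (b (Sum.inr i)) +
      Q (b (Sum.inr j)) = 0)
    (hb₃ : ∀ i j, Q (b (Sum.inl i) + b (Sum.inr j)) + Q (b (Sum.inl i)) +
      Q (b (Sum.inr j)) = if i = j then 1 else 0) :
    (∑ x : Fin (2 * m) → ZMod 2, (-1 : ℤ) ^ (Q x).val =
      (-1 : ℤ) ^ ((∑ j : Fin m, Q (b (Sum.inl j)) * Q (b (Sum.inr j))).val) *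
        2 ^ m) ∧
    |∑ x : Fin (2 * m) → ZMod 2, (-1 : ℤ) ^ (Q x).val| = 2 ^ m :=
  stmt14_general m Q hB₂ b hb₁ hb₂ hb₃
end

section
/- Every nondegenerate quadratic form Q on (ℤ/2)^(2m) with Arf invariant 0 is equivalent to the m-fold direct sum Q₁ ⊕ ⋯ ⊕ Q₁, and every such form with Arf invariant 1 is equivalent to Q₁ ⊕ ⋯ ⊕ Q₁ ⊕ Q₂ ((m-1) copies of Q₁ and one Q₂). -/
/-!
Over a symplectic basis `eᵢ, fᵢ` the form splits as an orthogonal sum of the binary forms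
`Q(eᵢ) x² + x y + Q(fᵢ) y²`. Over `ℤ/2` such a binary form is `xy` unless `Q(eᵢ) = Q(fᵢ) = 1`,
in which case it is `x² + xy + y²`; and two copies of the latter are equivalent to two copies of
`xy`. Sweeping through the summands collects all of them into a single one whose type is
`∑ᵢ Q(eᵢ) Q(fᵢ)`, the Arf invariant.
-/

@[simps]
def LinearEquiv.sumArrowLequivArrowProd (ι R M : Type*) [Semiring R] [AddCommMonoid M]
    [Module R M] : (ι ⊕ ι → M) ≃ₗ[R] (ι → M × M) where
  toFun w j := (w (.inl j), w (.inr j))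
  invFun v := Sum.elim (fun j => (v j).1) (fun j => (v j).2)
  map_add' _ _ := rfl
  map_smul' _ _ := rfl
  left_inv w := by ext (j | j) <;> rfl
  right_inv _ := rfl

theorem ZMod.eq_zero_or_eq_one_of_two (a : ZMod 2) : a = 0 ∨ a = 1 := by
  revert a
  decide

namespace QuadraticMap

section ZModTwo

variable {M N : Type*} [AddCommGroup M] [Module (ZMod 2) M] [AddCommGroup N] [Module (ZMod 2) N]

omit [Module (ZMod 2) M] in
theorem polar_eq_add_add (f : M → N) (x y : M) : polar f x y = f (x + y) + f x + f y := by
  simp only [polar, ZModModule.sub_eq_add]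

def ofPolarAddLeft (f : M → N) (h : ∀ x x' y, polar f (x + x') y = polar f x y + polar f x' y) :
    QuadraticMap (ZMod 2) M N := by
  have f_zero : f 0 = 0 := by simpa [polar] using h 0 0 0
  refine ofPolar f (fun a x => ?_) h (fun a x y => ?_) <;>
    obtain rfl | rfl := ZMod.eq_zero_or_eq_one_of_two a
  · simp [f_zero]
  · simp
  · simp [polar, f_zero]
  · simp

@[simp]
theorem ofPolarAddLeft_apply (f : M → N) (h) (x : M) : ofPolarAddLeft f h x = f x := rfl

end ZModTwo

theorem ext_basis {R M N ι : Type*} [CommRing R] [AddCommGroup M] [Module R M] [AddCommGroup N]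
    [Module R N] (b : Module.Basis ι R M) {Q Q' : QuadraticMap R M N}
    (h_polar : ∀ i j, polar Q (b i) (b j) = polar Q' (b i) (b j))
    (h_diag : ∀ i, Q (b i) = Q' (b i)) : Q = Q' := by
  classical
  have h_sym2 : ∀ p : Sym2 ι, polarSym2 Q (p.map b) = polarSym2 Q' (p.map b) := by
    rintro ⟨i, j⟩
    simpa using h_polar i j
  ext x
  rw [← sum_repr_sq_add_sum_repr_mul_polar Q b x, ← sum_repr_sq_add_sum_repr_mul_polar Q' b x]
  simp only [h_sym2, Function.comp_def, h_diag]

theorem polar_pi_single {R M P ι : Type*} [CommRing R] [AddCommGroup M] [Module R M]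
    [AddCommGroup P] [Module R P] [Fintype ι] [DecidableEq ι] (Q : ι → QuadraticMap R M P)
    (i j : ι) (x y : M) :
    polar (pi Q) (Pi.single i x) (Pi.single j y) = if i = j then polar (Q i) x y else 0 := by
  rw [Ring.polar_pi, Fintype.sum_eq_single i fun k hk => by simp [Pi.single_eq_of_ne hk]]
  split_ifs with h
  · subst h
    simp
  · simp [Pi.single_eq_of_ne h]

section Structural

variable {R M₁ M₂ M₃ P : Type*} [CommSemiring R] [AddCommMonoid M₁] [AddCommMonoid M₂]
  [AddCommMonoid M₃] [AddCommMonoid P] [Module R M₁] [Module R M₂] [Module R M₃] [Module R P]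

theorem equivalent_prod_assoc (Q₁ : QuadraticMap R M₁ P) (Q₂ : QuadraticMap R M₂ P)
    (Q₃ : QuadraticMap R M₃ P) : ((Q₁.prod Q₂).prod Q₃).Equivalent (Q₁.prod (Q₂.prod Q₃)) :=
  ⟨{ LinearEquiv.prodAssoc R M₁ M₂ M₃ with map_app' := fun _ => (add_assoc _ _ _).symm }⟩

theorem equivalent_prod_comm (Q₁ : QuadraticMap R M₁ P) (Q₂ : QuadraticMap R M₂ P) :
    (Q₁.prod Q₂).Equivalent (Q₂.prod Q₁) :=
  ⟨IsometryEquiv.prodComm Q₁ Q₂⟩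

theorem equivalent_prod_left_comm (Q₁ : QuadraticMap R M₁ P) (Q₂ : QuadraticMap R M₂ P)
    (Q₃ : QuadraticMap R M₃ P) : (Q₁.prod (Q₂.prod Q₃)).Equivalent (Q₂.prod (Q₁.prod Q₃)) :=
  ⟨{ toLinearEquiv := (LinearEquiv.prodAssoc R M₁ M₂ M₃).symm ≪≫ₗ
        (LinearEquiv.prodComm R M₁ M₂).prodCongr (.refl R M₃) ≪≫ₗ LinearEquiv.prodAssoc R M₂ M₁ M₃
     map_app' := fun _ => add_left_comm _ _ _ }⟩

theorem equivalent_pi_fin_succ {n : ℕ} (Q : Fin (n + 1) → QuadraticMap R M₁ P) :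
    (pi Q).Equivalent ((Q 0).prod (pi fun i : Fin n => Q i.succ)) :=
  ⟨{ toLinearEquiv := (Fin.consLinearEquiv R fun _ => M₁).symm
     map_app' := fun x => by simp [Fin.sum_univ_succ, Fin.tail] }⟩

end Structural

section BinaryForm

variable {R : Type*} [CommRing R]

/-- `a x² + x y + c y²`; over `ℤ/2`, `binaryForm 0 0` and `binaryForm 1 1` are `Q₁` and `Q₂`. -/
def binaryForm (a c : R) : QuadraticForm R (R × R) :=
  a • linMulLin (.fst R R R) (.fst R R R) + linMulLin (.fst R R R) (.snd R R R) +
    c • linMulLin (.snd R R R) (.snd R R R)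

@[simp]
theorem binaryForm_apply (a c : R) (p : R × R) :
    binaryForm a c p = a * (p.1 * p.1) + p.1 * p.2 + c * (p.2 * p.2) := rfl

@[simp]
theorem polar_binaryForm (a c : R) (p q : R × R) :
    polar (binaryForm a c) p q =
      2 * a * (p.1 * q.1) + (p.1 * q.2 + p.2 * q.1) + 2 * c * (p.2 * q.2) := by
  simp only [polar, binaryForm_apply, Prod.fst_add, Prod.snd_add]
  ring

theorem binaryForm_comm (a c : R) : (binaryForm a c).Equivalent (binaryForm c a) :=
  ⟨{ LinearEquiv.prodComm R R R with map_app' := fun p => by simp; ring }⟩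

theorem binaryForm_zero_right_equivalent (a : R) :
    (binaryForm a 0).Equivalent (binaryForm 0 0) :=
  ⟨{ LinearEquiv.skewProd (.refl R R) (.refl R R) (a • LinearMap.id) with
      map_app' := fun p => by simp; ring }⟩

end BinaryForm

theorem equivalent_pi_binaryForm {R M ι : Type*} [CommRing R] [AddCommGroup M] [Module R M]
    [Fintype ι] [DecidableEq ι] (Q : QuadraticForm R M) (b : Module.Basis (ι ⊕ ι) R M)
    (h₁ : ∀ i j, polar Q (b (.inl i)) (b (.inl j)) = 0)
    (h₂ : ∀ i j, polar Q (b (.inr i)) (b (.inr j)) = 0)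
    (h₃ : ∀ i j, polar Q (b (.inl i)) (b (.inr j)) = if i = j then 1 else 0) :
    Q.Equivalent (pi fun i => binaryForm (Q (b (.inl i))) (Q (b (.inr i)))) := by
  set e := b.equivFun.trans (LinearEquiv.sumArrowLequivArrowProd ι R R)
  set B := pi fun i => binaryForm (Q (b (.inl i))) (Q (b (.inr i)))
  have he_inl : ∀ i, e (b (.inl i)) = Pi.single i (1, 0) := by
    intro i; ext j <;> by_cases h : i = j <;> simp [e, h]
  have he_inr : ∀ i, e (b (.inr i)) = Pi.single i (0, 1) := by
    intro i; ext j <;> by_cases h : i = j <;> simp [e, h]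
  have two_mul_eq_zero : ∀ s, 2 * Q (b s) = 0 := fun s => by
    rw [two_mul, ← two_nsmul, ← polar_self]
    rcases s with i | i
    exacts [h₁ i i, h₂ i i]
  have hQ : Q = B.comp (e : M →ₗ[R] _) := by
    refine ext_basis b (fun s s' => ?_) (fun s => ?_)
    · have polar_comp_e :
          polar (B.comp (e : M →ₗ[R] _)) (b s) (b s') = polar B (e (b s)) (e (b s')) := by
        simp only [polar, comp_apply, map_add, LinearEquiv.coe_coe]
      rw [polar_comp_e]
      rcases s with i | i <;> rcases s' with j | j <;>
        simp only [B, he_inl, he_inr, polar_pi_single] <;> split_ifs with h <;>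
        simp [h, eq_comm, h₁, h₂, h₃, polar_comm Q (b (.inr _)), two_mul_eq_zero]
    · change Q (b s) = B (e (b s))
      rcases s with i | i <;> simp only [B, he_inl, he_inr, pi_apply_single] <;> simp
  exact ⟨{ e with map_app' := fun x => (DFunLike.congr_fun hQ x).symm }⟩

section ArfInvariant

theorem binaryForm_equivalent_mul (a c : ZMod 2) :
    (binaryForm a c).Equivalent (binaryForm (a * c) (a * c)) := by
  obtain rfl | rfl := ZMod.eq_zero_or_eq_one_of_two a <;>
    obtain rfl | rfl := ZMod.eq_zero_or_eq_one_of_two c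
  · simpa using Equivalent.refl _
  · simpa using (binaryForm_comm _ _).trans (binaryForm_zero_right_equivalent 1)
  · simpa using binaryForm_zero_right_equivalent 1
  · simpa using Equivalent.refl _

theorem binaryForm_one_prod_one_equivalent :
    ((binaryForm (1 : ZMod 2) 1).prod (binaryForm 1 1)).Equivalent
      ((binaryForm 0 0).prod (binaryForm 0 0)) := by
  let f : (ZMod 2 × ZMod 2) × (ZMod 2 × ZMod 2) →ₗ[ZMod 2] (ZMod 2 × ZMod 2) × (ZMod 2 × ZMod 2) :=
    { toFun := fun ((x₁, y₁), (x₂, y₂)) =>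
        ((y₁ + x₂ + y₂, x₁ + x₂ + y₂), (x₁ + y₁ + y₂, x₁ + y₁ + x₂))
      map_add' := fun _ _ => by ext <;> simp <;> ring
      map_smul' := fun _ _ => by ext <;> simp <;> ring }
  have hf : Function.Involutive f := by
    rintro ⟨⟨x₁, y₁⟩, x₂, y₂⟩
    simp only [f, LinearMap.coe_mk, AddHom.coe_mk]
    revert x₁ y₁ x₂ y₂
    decide
  refine ⟨{ LinearEquiv.ofInvolutive f hf with map_app' := ?_ }⟩
  rintro ⟨⟨x₁, y₁⟩, x₂, y₂⟩
  simp only [f, LinearEquiv.ofInvolutive, LinearMap.coe_mk, AddHom.coe_mk, prod_apply,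
    binaryForm_apply]
  revert x₁ y₁ x₂ y₂
  decide

theorem binaryForm_prod_equivalent_add (a c : ZMod 2) :
    ((binaryForm a a).prod (binaryForm c c)).Equivalent
      ((binaryForm 0 0).prod (binaryForm (a + c) (a + c))) := by
  obtain rfl | rfl := ZMod.eq_zero_or_eq_one_of_two a <;>
    obtain rfl | rfl := ZMod.eq_zero_or_eq_one_of_two c
  · simpa using Equivalent.refl _
  · simpa using Equivalent.refl _
  · simpa using equivalent_prod_comm _ _
  · exact binaryForm_one_prod_one_equivalent

theorem binaryForm_prod_pi_equivalent {n : ℕ} (s : ZMod 2) (t : Fin n → ZMod 2) :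
    ((binaryForm s s).prod (pi fun j => binaryForm (t j) (t j))).Equivalent
      ((binaryForm (s + ∑ j, t j) (s + ∑ j, t j)).prod (pi fun _ : Fin n => binaryForm 0 0)) := by
  induction n generalizing s with
  | zero =>
    obtain rfl : t = 0 := Subsingleton.elim _ _
    simpa using Equivalent.refl _
  | succ n ih =>
    rw [Fin.sum_univ_succ, ← add_assoc]
    refine ((Equivalent.refl _).prod (equivalent_pi_fin_succ _)).trans ?_
    refine (equivalent_prod_assoc _ _ _).symm.trans ?_
    refine ((binaryForm_prod_equivalent_add s (t 0)).prod (Equivalent.refl _)).trans ?_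
    refine (equivalent_prod_assoc _ _ _).trans ?_
    refine ((Equivalent.refl _).prod (ih _ _)).trans ?_
    refine (equivalent_prod_left_comm _ _ _).trans ?_
    exact (Equivalent.refl _).prod (equivalent_pi_fin_succ fun _ => binaryForm 0 0).symm

theorem pi_binaryForm_equivalent {n : ℕ} (t : Fin (n + 1) → ZMod 2) :
    (pi fun j => binaryForm (t j) (t j)).Equivalent
      ((pi fun _ : Fin n => binaryForm 0 0).prod (binaryForm (∑ j, t j) (∑ j, t j))) := by
  rw [Fin.sum_univ_succ]
  exact (equivalent_pi_fin_succ _).trans <|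
    (binaryForm_prod_pi_equivalent _ _).trans (equivalent_prod_comm _ _)

theorem pi_binaryForm_equivalent_of_sum_eq_zero {m : ℕ} (t : Fin m → ZMod 2)
    (ht : ∑ j, t j = 0) :
    (pi fun j => binaryForm (t j) (t j)).Equivalent (pi fun _ : Fin m => binaryForm 0 0) := by
  cases m with
  | zero =>
    obtain rfl : t = 0 := Subsingleton.elim _ _
    exact Equivalent.refl _
  | succ n =>
    refine (pi_binaryForm_equivalent t).trans ?_
    rw [ht]
    exact (equivalent_prod_comm _ _).trans (equivalent_pi_fin_succ fun _ => binaryForm 0 0).symm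

theorem pi_binaryForm_equivalent_of_sum_eq_one {m : ℕ} (t : Fin m → ZMod 2)
    (ht : ∑ j, t j = 1) :
    (pi fun j => binaryForm (t j) (t j)).Equivalent
      ((pi fun _ : Fin (m - 1) => binaryForm 0 0).prod (binaryForm 1 1)) := by
  cases m with
  | zero => simp at ht
  | succ n => simpa [ht] using pi_binaryForm_equivalent t

end ArfInvariant

end QuadraticMap

open QuadraticMap

theorem stmt16_general (m : ℕ) (Q : (Fin (2 * m) → ZMod 2) → ZMod 2)
    (hB₁ : ∀ x y z : Fin (2 * m) → ZMod 2,
      Q (x + y + z) + Q (x + y) + Q z =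
        (Q (x + z) + Q x + Q z) + (Q (y + z) + Q y + Q z))
    (b : Module.Basis (Fin m ⊕ Fin m) (ZMod 2) (Fin (2 * m) → ZMod 2))
    (hb₁ : ∀ i j, Q (b (Sum.inl i) + b (Sum.inl j)) + Q (b (Sum.inl i)) +
      Q (b (Sum.inl j)) = 0)
    (hb₂ : ∀ i j, Q (b (Sum.inr i) + b (Sum.inr j)) + Q (b (Sum.inr i)) +
      Q (b (Sum.inr j)) = 0)
    (hb₃ : ∀ i j, Q (b (Sum.inl i) + b (Sum.inr j)) + Q (b (Sum.inl i)) +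
      Q (b (Sum.inr j)) = if i = j then 1 else 0) :
    ((∑ j : Fin m, Q (b (Sum.inl j)) * Q (b (Sum.inr j))) = 0 →
      ∃ f : (Fin (2 * m) → ZMod 2) ≃ₗ[ZMod 2] (Fin m → ZMod 2 × ZMod 2),
        ∀ x, Q x = ∑ j : Fin m, (f x j).1 * (f x j).2) ∧
    ((∑ j : Fin m, Q (b (Sum.inl j)) * Q (b (Sum.inr j))) = 1 →
      ∃ f : (Fin (2 * m) → ZMod 2) ≃ₗ[ZMod 2]
          ((Fin (m - 1) → ZMod 2 × ZMod 2) × (ZMod 2 × ZMod 2)),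
        ∀ x, Q x = (∑ j : Fin (m - 1), ((f x).1 j).1 * ((f x).1 j).2) +
          ((f x).2.1 + (f x).2.1 * (f x).2.2 + (f x).2.2)) := by
  classical
  let Q' := ofPolarAddLeft Q fun x x' y => by simpa only [polar_eq_add_add] using hB₁ x x' y
  have hQ' : Q'.Equivalent
      (pi fun j => binaryForm (Q (b (.inl j)) * Q (b (.inr j)))
        (Q (b (.inl j)) * Q (b (.inr j)))) :=
    (equivalent_pi_binaryForm Q' b (by simpa [Q', polar_eq_add_add] using hb₁)
      (by simpa [Q', polar_eq_add_add] using hb₂) (by simpa [Q', polar_eq_add_add] using hb₃)).trans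
      (Equivalent.pi fun j => binaryForm_equivalent_mul _ _)
  refine ⟨fun h_arf => ?_, fun h_arf => ?_⟩
  · obtain ⟨g⟩ := hQ'.trans (pi_binaryForm_equivalent_of_sum_eq_zero _ h_arf)
    refine ⟨g, fun x => ?_⟩
    change Q' x = _
    rw [← g.map_app x]
    simp only [pi_apply, binaryForm_apply, zero_mul, zero_add, add_zero,
      IsometryEquiv.coe_toLinearEquiv]
  · obtain ⟨g⟩ := hQ'.trans (pi_binaryForm_equivalent_of_sum_eq_one _ h_arf)
    have mul_self (x : ZMod 2) : x * x = x := by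
      obtain rfl | rfl := ZMod.eq_zero_or_eq_one_of_two x <;> rfl
    refine ⟨g, fun x => ?_⟩
    change Q' x = _
    rw [← g.map_app x]
    simp only [prod_apply, pi_apply, binaryForm_apply, zero_mul, one_mul, zero_add, add_zero,
      mul_self, IsometryEquiv.coe_toLinearEquiv]

/-- Arf's classification: a nondegenerate quadratic form on `(ℤ/2)^(2m)` with
Arf invariant 0 is equivalent to `Q₁^(⊕m)`, and one with Arf invariant 1 is
equivalent to `Q₁^(⊕(m-1)) ⊕ Q₂`. -/
theorem stmt16 (m : ℕ) (Q : (Fin (2 * m) → ZMod 2) → ZMod 2)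
    (hB₁ : ∀ x y z : Fin (2 * m) → ZMod 2,
      Q (x + y + z) + Q (x + y) + Q z =
        (Q (x + z) + Q x + Q z) + (Q (y + z) + Q y + Q z))
    (hB₂ : ∀ x y z : Fin (2 * m) → ZMod 2,
      Q (x + (y + z)) + Q x + Q (y + z) =
        (Q (x + y) + Q x + Q y) + (Q (x + z) + Q x + Q z))
    (hnd : ∀ x : Fin (2 * m) → ZMod 2,
      (∀ y, Q (x + y) + Q x + Q y = 0) → x = 0)
    (b : Module.Basis (Fin m ⊕ Fin m) (ZMod 2) (Fin (2 * m) → ZMod 2))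
    (hb₁ : ∀ i j, Q (b (Sum.inl i) + b (Sum.inl j)) + Q (b (Sum.inl i)) +
      Q (b (Sum.inl j)) = 0)
    (hb₂ : ∀ i j, Q (b (Sum.inr i) + b (Sum.inr j)) + Q (b (Sum.inr i)) +
      Q (b (Sum.inr j)) = 0)
    (hb₃ : ∀ i j, Q (b (Sum.inl i) + b (Sum.inr j)) + Q (b (Sum.inl i)) +
      Q (b (Sum.inr j)) = if i = j then 1 else 0) :
    ((∑ j : Fin m, Q (b (Sum.inl j)) * Q (b (Sum.inr j))) = 0 →
      ∃ f : (Fin (2 * m) → ZMod 2) ≃ₗ[ZMod 2] (Fin m → ZMod 2 × ZMod 2),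
        ∀ x, Q x = ∑ j : Fin m, (f x j).1 * (f x j).2) ∧
    ((∑ j : Fin m, Q (b (Sum.inl j)) * Q (b (Sum.inr j))) = 1 →
      ∃ f : (Fin (2 * m) → ZMod 2) ≃ₗ[ZMod 2]
          ((Fin (m - 1) → ZMod 2 × ZMod 2) × (ZMod 2 × ZMod 2)),
        ∀ x, Q x = (∑ j : Fin (m - 1), ((f x).1 j).1 * ((f x).1 j).2) +
          ((f x).2.1 + (f x).2.1 * (f x).2.2 + (f x).2.2)) :=
  stmt16_general m Q hB₁ b hb₁ hb₂ hb₃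
end

section
/- Let ω(x,y,z) = ∏_r (-1)^(a_r i_r ⌊(j_r+k_r)/2⌋) · ∏_{r<s} (-1)^(a_{rs} k_r ⌊(i_s+j_s)/2⌋) · ∏_{r<s<t} (-1)^(a_{rst} k_r j_s i_t) be the general normalized 3-cocycle on (ℤ/2)^n, where x = (i_1,…,i_n), y = (j_1,…,j_n), z = (k_1,…,k_n) with entries in {0,1} and parameters a_r, a_{rs}, a_{rst} ∈ {0,1}. If ω(x,x,x) = 1 for all x ∈ (ℤ/2)^n, then all parameters a_r, a_{rs}, a_{rst} are 0, and hence ω is identically 1. -/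
/-- The general normalized 3-cocycle on `(ℤ/2)^n`, with coordinates and
parameters represented by naturals in `{0,1}`. -/
def omega3 (n : ℕ) (a1 : Fin n → ℕ) (a2 : Fin n → Fin n → ℕ)
    (a3 : Fin n → Fin n → Fin n → ℕ) (x y z : Fin n → ℕ) : ℤ :=
  (∏ r, (-1 : ℤ) ^ (a1 r * x r * ((y r + z r) / 2))) *
  (∏ r, ∏ s, if r < s then
    (-1 : ℤ) ^ (a2 r s * z r * ((x s + y s) / 2)) else 1) *
  (∏ r, ∏ s, ∏ t, if r < s ∧ s < t then
    (-1 : ℤ) ^ (a3 r s t * z r * y s * x t) else 1)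

/-- If the diagonal `ω(x,x,x)` of the general normalized 3-cocycle on `(ℤ/2)^n`
is identically 1, then all the parameters vanish and `ω` is identically 1. -/
theorem stmt18 (n : ℕ) (a1 : Fin n → ℕ) (a2 : Fin n → Fin n → ℕ)
    (a3 : Fin n → Fin n → Fin n → ℕ)
    (ha1 : ∀ r, a1 r ≤ 1) (ha2 : ∀ r s, a2 r s ≤ 1)
    (ha3 : ∀ r s t, a3 r s t ≤ 1)
    (hdiag : ∀ i : Fin n → ℕ, (∀ r, i r ≤ 1) →
      omega3 n a1 a2 a3 i i i = 1) :
    (∀ r, a1 r = 0) ∧ (∀ r s, r < s → a2 r s = 0) ∧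
    (∀ r s t, r < s → s < t → a3 r s t = 0) ∧
    (∀ x y z : Fin n → ℕ, (∀ r, x r ≤ 1) → (∀ r, y r ≤ 1) → (∀ r, z r ≤ 1) →
      omega3 n a1 a2 a3 x y z = 1) := by
  have h1 : ∀ r, a1 r = 0 := by
    intro r
    have h := hdiag (fun t => if t = r then 1 else 0)
      (by intro t; split <;> simp)
    rw [omega3] at h
    set x : Fin n → ℕ := fun t => if t = r then 1 else 0 with hx
    have e1 : (∏ r', (-1:ℤ) ^ (a1 r' * x r' * ((x r' + x r') / 2))) = (-1) ^ (a1 r) := by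
      rw [Finset.prod_eq_single r]
      · simp [hx]
      · intro b _ hb; simp [hx, hb]
      · simp
    have e2 : (∏ r', ∏ s', if r' < s' then
        (-1:ℤ) ^ (a2 r' s' * x r' * ((x s' + x s') / 2)) else 1) = 1 := by
      refine Finset.prod_eq_one fun r' _ => Finset.prod_eq_one fun s' _ => ?_
      split_ifs with hlt
      · rcases eq_or_ne r' r with rfl | h'
        · have hs : s' ≠ r' := hlt.ne'
          simp [hx, hs]
        · simp [hx, h']
      · rfl
    have e3 : (∏ r', ∏ s', ∏ t', if r' < s' ∧ s' < t' then
        (-1:ℤ) ^ (a3 r' s' t' * x r' * x s' * x t') else 1) = 1 := by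
      refine Finset.prod_eq_one fun r' _ => Finset.prod_eq_one fun s' _ =>
        Finset.prod_eq_one fun t' _ => ?_
      split_ifs with hlt
      · rcases eq_or_ne r' r with rfl | h'
        · have hs : s' ≠ r' := hlt.1.ne'
          simp [hx, hs]
        · simp [hx, h']
      · rfl
    rw [e1, e2, e3, mul_one, mul_one] at h
    have hm := ha1 r
    interval_cases h' : a1 r
    · rfl
    · norm_num at h
  have h2 : ∀ r s, r < s → a2 r s = 0 := by
    intro r s hrs
    have h := hdiag (fun t => if t = r ∨ t = s then 1 else 0)
      (by intro t; split <;> simp)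
    rw [omega3] at h
    set x : Fin n → ℕ := fun t => if t = r ∨ t = s then 1 else 0 with hx
    have e1 : (∏ r', (-1:ℤ) ^ (a1 r' * x r' * ((x r' + x r') / 2))) = 1 := by
      refine Finset.prod_eq_one fun r' _ => ?_
      simp [h1 r']
    have e2 : (∏ r', ∏ s', if r' < s' then
        (-1:ℤ) ^ (a2 r' s' * x r' * ((x s' + x s') / 2)) else 1) = (-1) ^ (a2 r s) := by
      rw [Finset.prod_eq_single r]
      · rw [Finset.prod_eq_single s]
        · simp [hx, hrs]
        · intro b _ hb
          split_ifs with hlt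
          · have hbr : b ≠ r := hlt.ne'
            simp [hx, hb, hbr]
          · rfl
        · simp
      · intro b _ hb
        refine Finset.prod_eq_one fun s' _ => ?_
        split_ifs with hlt
        · rcases eq_or_ne b s with rfl | hbs
          · have h1' : s' ≠ r := fun h' => absurd (h' ▸ hlt) (lt_asymm hrs)
            have h2' : s' ≠ b := hlt.ne'
            simp [hx, h1', h2']
          · simp [hx, hb, hbs]
        · rfl
      · simp
    have e3 : (∏ r', ∏ s', ∏ t', if r' < s' ∧ s' < t' then
        (-1:ℤ) ^ (a3 r' s' t' * x r' * x s' * x t') else 1) = 1 := by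
      refine Finset.prod_eq_one fun r' _ => Finset.prod_eq_one fun s' _ =>
        Finset.prod_eq_one fun t' _ => ?_
      split_ifs with hlt
      · obtain ⟨h12, h23⟩ := hlt
        by_cases hr' : r' = r ∨ r' = s
        · by_cases hs' : s' = r ∨ s' = s
          · -- forced r' = r, s' = s, so t' > s hence t' ∉ {r,s}
            have hs2 : s' = s := by
              rcases hr' with rfl | rfl <;> rcases hs' with  h' | h'
              · exact absurd (h' ▸ h12) (lt_irrefl _)
              · exact h'
              · exact absurd (h' ▸ h12) (lt_asymm hrs)
              · exact h'
            have ht1 : t' ≠ r := fun h' => absurd (h' ▸ (hs2 ▸ h23)) (lt_asymm hrs)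
            have ht2 : t' ≠ s := fun h' => absurd (h' ▸ (hs2 ▸ h23)) (lt_irrefl _)
            simp [hx, ht1, ht2]
          · simp [hx, hs']
        · simp [hx, hr']
      · rfl
    rw [e1, e2, e3, one_mul, mul_one] at h
    have hm := ha2 r s
    interval_cases h' : a2 r s
    · rfl
    · norm_num at h
  have h3 : ∀ r s t, r < s → s < t → a3 r s t = 0 := by
    intro r s t hrs hst
    have hrt : r < t := hrs.trans hst
    have h := hdiag (fun u => if u = r ∨ u = s ∨ u = t then 1 else 0)
      (by intro u; split <;> simp)
    rw [omega3] at h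
    set x : Fin n → ℕ := fun u => if u = r ∨ u = s ∨ u = t then 1 else 0 with hx
    -- x evaluation helper
    have hx0 : ∀ u, u ≠ r → u ≠ s → u ≠ t → x u = 0 := by
      intro u h1' h2' h3'; simp [hx, h1', h2', h3']
    have e1 : (∏ r', (-1:ℤ) ^ (a1 r' * x r' * ((x r' + x r') / 2))) = 1 := by
      refine Finset.prod_eq_one fun r' _ => ?_
      simp [h1 r']
    have e2 : (∏ r', ∏ s', if r' < s' then
        (-1:ℤ) ^ (a2 r' s' * x r' * ((x s' + x s') / 2)) else 1) = 1 := by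
      refine Finset.prod_eq_one fun r' _ => Finset.prod_eq_one fun s' _ => ?_
      split_ifs with hlt
      · simp [h2 r' s' hlt]
      · rfl
    have e3 : (∏ r', ∏ s', ∏ t', if r' < s' ∧ s' < t' then
        (-1:ℤ) ^ (a3 r' s' t' * x r' * x s' * x t') else 1) = (-1) ^ (a3 r s t) := by
      rw [Finset.prod_eq_single r]
      · rw [Finset.prod_eq_single s]
        · rw [Finset.prod_eq_single t]
          · simp [hx, hrs, hst]
          · intro b _ hb
            split_ifs with hlt
            · obtain ⟨h12, h23⟩ := hlt
              have hb1 : b ≠ r := fun h' => absurd (h' ▸ h23) (lt_asymm hrs)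
              have hb2 : b ≠ s := fun h' => absurd (h' ▸ h23) (lt_irrefl _)
              rw [hx0 b hb1 hb2 hb]; ring_nf
            · rfl
          · simp
        · intro b _ hb
          refine Finset.prod_eq_one fun t' _ => ?_
          split_ifs with hlt
          · obtain ⟨h12, h23⟩ := hlt
            have hb1 : b ≠ r := h12.ne'
            rcases eq_or_ne b t with rfl | hb3
            · have h1' : t' ≠ r := fun h' => absurd (h' ▸ h23) (lt_asymm hrt)
              have h2' : t' ≠ s := fun h' => absurd (h' ▸ h23) (lt_asymm hst)
              have h3' : t' ≠ b := h23.ne'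
              rw [hx0 t' h1' h2' h3']; ring_nf
            · rw [hx0 b hb1 hb hb3]; ring_nf
          · rfl
        · simp
      · intro b _ hb
        refine Finset.prod_eq_one fun s' _ => Finset.prod_eq_one fun t' _ => ?_
        split_ifs with hlt
        · obtain ⟨h12, h23⟩ := hlt
          rcases eq_or_ne b s with rfl | hb2
          · -- b = s : s' > s
            have h1' : s' ≠ r := fun h' => absurd (h' ▸ h12) (lt_asymm hrs)
            have h2' : s' ≠ b := h12.ne'
            rcases eq_or_ne s' t with rfl | h3'
            · have g1 : t' ≠ r := fun h' => absurd (h' ▸ h23) (lt_asymm hrt)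
              have g2 : t' ≠ b := fun h' => absurd (h' ▸ h23) (lt_asymm hst)
              have g3 : t' ≠ s' := h23.ne'
              rw [hx0 t' g1 g2 g3]; ring_nf
            · rw [hx0 s' h1' h2' h3']; ring_nf
          · rcases eq_or_ne b t with rfl | hb3
            · have h1' : s' ≠ r := fun h' => absurd (h' ▸ h12) (lt_asymm hrt)
              have h2' : s' ≠ s := fun h' => absurd (h' ▸ h12) (lt_asymm hst)
              have h3' : s' ≠ b := h12.ne'
              rw [hx0 s' h1' h2' h3']; ring_nf
            · rw [hx0 b hb hb2 hb3]; ring_nf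
        · rfl
      · simp
    rw [e1, e2, e3, one_mul, one_mul] at h
    have hm := ha3 r s t
    interval_cases h' : a3 r s t
    · rfl
    · norm_num at h
  refine ⟨h1, h2, h3, ?_⟩
  intro x y z hxb hyb hzb
  rw [omega3]
  have e1 : (∏ r, (-1:ℤ) ^ (a1 r * x r * ((y r + z r) / 2))) = 1 :=
    Finset.prod_eq_one fun r _ => by simp [h1 r]
  have e2 : (∏ r, ∏ s, if r < s then
      (-1:ℤ) ^ (a2 r s * z r * ((x s + y s) / 2)) else 1) = 1 := by
    refine Finset.prod_eq_one fun r _ => Finset.prod_eq_one fun s _ => ?_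
    split_ifs with hlt
    · simp [h2 r s hlt]
    · rfl
  have e3 : (∏ r, ∏ s, ∏ t, if r < s ∧ s < t then
      (-1:ℤ) ^ (a3 r s t * z r * y s * x t) else 1) = 1 := by
    refine Finset.prod_eq_one fun r _ => Finset.prod_eq_one fun s _ =>
      Finset.prod_eq_one fun t _ => ?_
    split_ifs with hlt
    · simp [h3 r s t hlt.1 hlt.2]
    · rfl
  rw [e1, e2, e3, one_mul, one_mul]
end
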